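/- arXiv:2405.20406 — 5 statements merged into one kernel-verified Lean document; each statement's English description precedes it below -/
import Mathlib

section
/- Let (S,s) be a finite bijective irretractable set-theoretic solution to the Pentagon Equation, with s(x,y) = (x·y, θ_x(y)) and s⁻¹(x,y) = (ψ_y(x), y∘x), let 1 be the unique ·-idempotent with θ_1 = id_S, let A be the set of ·-idempotents (a group under ∘ with identity 1) and G = {1·x : x ∈ S} (a group under · with identity 1). For a ∈ A, x ∈ G define σ_a(x) = 1·θ_a(x) ∈ G and δ_x(a) = (1 ∘ ψ_{x'}(a'))' ∈ A, where a' denotes the ∘-inverse of a in A and x' the ·-inverse of x in G. Then (A,G,σ,δ) is a matched pair of groups; in particular for all a,b ∈ A and x,y ∈ G one has σ_a(x·y) = σ_a(x)·σ_{δ_x(a)}(y) and δ_x(a∘b) = δ_{σ_b(x)}(a) ∘ δ_x(b). -/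
namespace PE

/-- `s` applied to components 1,2 of a triple. -/
def s12 {S : Type*} (s : S × S → S × S) : S × S × S → S × S × S :=
  fun p => ((s (p.1, p.2.1)).1, (s (p.1, p.2.1)).2, p.2.2)

/-- `s` applied to components 1,3 of a triple. -/
def s13 {S : Type*} (s : S × S → S × S) : S × S × S → S × S × S :=
  fun p => ((s (p.1, p.2.2)).1, p.2.1, (s (p.1, p.2.2)).2)

/-- `s` applied to components 2,3 of a triple. -/
def s23 {S : Type*} (s : S × S → S × S) : S × S × S → S × S × S :=
  fun p => (p.1, s (p.2.1, p.2.2))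

/-- `(S, s)` is a set-theoretic solution to the Pentagon Equation:
`s₂₃ ∘ s₁₃ ∘ s₁₂ = s₁₂ ∘ s₂₃`. -/
def IsPE {S : Type*} (s : S × S → S × S) : Prop :=
  s23 s ∘ s13 s ∘ s12 s = s12 s ∘ s23 s

/-- The induced binary operation `x · y`: the first component of `s (x, y)`. -/
def mul {S : Type*} (s : S × S → S × S) (x y : S) : S := (s (x, y)).1

/-- The map `θ_x`: `theta s x y = θ_x(y)` is the second component of `s (x, y)`. -/
def theta {S : Type*} (s : S × S → S × S) (x y : S) : S := (s (x, y)).2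

/-- The operation `x ∘ y`: the second component of `s⁻¹ (y, x)`. -/
def circ {S : Type*} (sinv : S × S → S × S) (x y : S) : S := (sinv (y, x)).2

/-- The map `ψ_x`: `psi sinv x y = ψ_x(y)` is the first component of `s⁻¹ (y, x)`. -/
def psi {S : Type*} (sinv : S × S → S × S) (x y : S) : S := (sinv (y, x)).1

/-- for a finite bijective irretractable solution with groups
`A` (the `·`-idempotents, under `∘`) and `G = 1·S` (under `·`), with `∘`-inverse
map `ainv` on `A` and `·`-inverse map `ginv` on `G`, the maps
`σ_a(x) = 1·θ_a(x)` and `δ_x(a) = (1 ∘ ψ_{x'}(a'))'` make `(A, G, σ, δ)` a matched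
pair of groups; in particular `σ_a(x·y) = σ_a(x)·σ_{δ_x(a)}(y)` and
`δ_x(a∘b) = δ_{σ_b(x)}(a) ∘ δ_x(b)`. -/
theorem statement15 {S : Type*} [Finite S] [Nonempty S] (s : S × S → S × S)
    (hPE : IsPE s) (hbij : Function.Bijective s)
    (sinv : S × S → S × S) (hinv₁ : ∀ p, sinv (s p) = p) (hinv₂ : ∀ p, s (sinv p) = p)
    (one : S) (hone : mul s one one = one) (honeθ : theta s one = id)
    (huniq : ∀ e : S, mul s e e = e → theta s e = id → e = one)
    (ainv : S → S)
    (hainv : ∀ a : S, mul s a a = a → mul s (ainv a) (ainv a) = ainv a ∧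
        circ sinv a (ainv a) = one ∧ circ sinv (ainv a) a = one)
    (ginv : S → S)
    (hginv : ∀ x ∈ Set.range (mul s one), ginv x ∈ Set.range (mul s one) ∧
        mul s x (ginv x) = one ∧ mul s (ginv x) x = one) :
    let A : Set S := {e | mul s e e = e}
    let G : Set S := Set.range (mul s one)
    let σ : S → S → S := fun a x => mul s one (theta s a x)
    let δ : S → S → S := fun x a => ainv (circ sinv one (psi sinv (ginv x) (ainv a)))
    (∀ a ∈ A, Set.BijOn (σ a) G G) ∧
    (∀ x ∈ G, Set.BijOn (δ x) A A) ∧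
    (∀ a ∈ A, ∀ b ∈ A, ∀ x ∈ G, σ (circ sinv a b) x = σ a (σ b x)) ∧
    (∀ x ∈ G, ∀ y ∈ G, ∀ a ∈ A, δ (mul s x y) a = δ y (δ x a)) ∧
    (∀ a ∈ A, ∀ x ∈ G, ∀ y ∈ G, σ a (mul s x y) = mul s (σ a x) (σ (δ x a) y)) ∧
    (∀ x ∈ G, ∀ a ∈ A, ∀ b ∈ A, δ x (circ sinv a b) = circ sinv (δ (σ b x) a) (δ x b)) := by
  -- θ_1 = id pointwise
  have hT1 : ∀ z : S, theta s one z = z := fun z => congrFun honeθ z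
  -- finiteness flip
  have flip : ∀ f g : S → S, (∀ z, f (g z) = z) → (∀ z, g (f z) = z) := by
    intro f g hfg
    have hginj : Function.Injective g := by
      intro a b hab
      rw [← hfg a, ← hfg b, hab]
    have hgsurj := Finite.surjective_of_injective hginj
    intro z
    obtain ⟨w, hw⟩ := hgsurj z
    rw [← hw, hfg w]
  -- PE components
  have key : ∀ x y z : S, s23 s (s13 s (s12 s (x, y, z))) = s12 s (s23 s (x, y, z)) :=
    fun x y z => congrFun hPE (x, y, z)
  have asc : ∀ x y z : S, mul s (mul s x y) z = mul s x (mul s y z) :=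
    fun x y z => congrArg (fun q => q.1) (key x y z)
  have hA2 : ∀ x y z : S,
      mul s (theta s x y) (theta s (mul s x y) z) = theta s x (mul s y z) :=
    fun x y z => congrArg (fun q => q.2.1) (key x y z)
  have hA3 : ∀ x y z : S,
      theta s (theta s x y) (theta s (mul s x y) z) = theta s y z :=
    fun x y z => congrArg (fun q => q.2.2) (key x y z)
  -- sinv basics
  have hsmk : ∀ x y : S, s (x, y) = (mul s x y, theta s x y) := fun x y => rfl
  have hdet : ∀ x y u v : S, s (x, y) = (u, v) → psi sinv v u = x ∧ circ sinv v u = y := by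
    intro x y u v h
    have h2 := hinv₁ (x, y)
    rw [h] at h2
    constructor
    · show (sinv (u, v)).1 = x
      rw [h2]
    · show (sinv (u, v)).2 = y
      rw [h2]
  have hB : ∀ u v : S, s (psi sinv v u, circ sinv v u) = (u, v) := by
    intro u v
    have h : sinv (u, v) = (psi sinv v u, circ sinv v u) := rfl
    rw [← h]
    exact hinv₂ (u, v)
  have B1 : ∀ u v : S, mul s (psi sinv v u) (circ sinv v u) = u :=
    fun u v => congrArg (fun q => q.1) (hB u v)
  have B2 : ∀ u v : S, theta s (psi sinv v u) (circ sinv v u) = v :=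
    fun u v => congrArg (fun q => q.2) (hB u v)
  -- G basics
  have honeG : one ∈ Set.range (mul s one) := ⟨one, hone⟩
  have hG1 : ∀ x ∈ Set.range (mul s one), mul s one x = x := by
    rintro x ⟨t, rfl⟩
    rw [← asc, hone]
  have hmulG : ∀ x ∈ Set.range (mul s one), ∀ y ∈ Set.range (mul s one),
      mul s x y ∈ Set.range (mul s one) := by
    intro x hx y _
    exact ⟨mul s x y, by rw [← asc, hG1 x hx]⟩
  have hg1 : ∀ x ∈ Set.range (mul s one), mul s x one = x := by
    intro x hx
    obtain ⟨_, hxx', hx'x⟩ := hginv x hx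
    calc mul s x one = mul s x (mul s (ginv x) x) := by rw [hx'x]
      _ = mul s (mul s x (ginv x)) x := (asc _ _ _).symm
      _ = mul s one x := by rw [hxx']
      _ = x := hG1 x hx
  -- θ_g = id
  have E4 : ∀ p z : S, theta s (theta s p one) (theta s (mul s p one) z) = z := by
    intro p z
    have h := hA3 p one z
    rwa [hT1] at h
  have E4f : ∀ p z : S, theta s (mul s p one) (theta s (theta s p one) z) = z :=
    fun p => flip _ _ (E4 p)
  have hθG : ∀ g ∈ Set.range (mul s one), ∀ z, theta s g z = z := by
    intro g hg z
    have injp1 : ∀ p a b : S, theta s (mul s p one) a = theta s (mul s p one) b → a = b := by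
      intro p a b h
      have h2 := congrArg (theta s (theta s p one)) h
      rwa [E4 p a, E4 p b] at h2
    have E3 : ∀ y z : S, theta s y (theta s (mul s one y) z) = theta s y z := by
      intro y z
      have h := hA3 one y z
      rwa [hT1 y] at h
    have hsmall : ∀ p z : S, theta s (mul s (mul s one p) one) z = z := by
      intro p z
      have h := E3 (mul s p one) z
      rw [show mul s one (mul s p one) = mul s (mul s one p) one by rw [asc]] at h
      exact injp1 p _ _ h
    have hrep : mul s (mul s one g) one = g := by rw [hG1 g hg, hg1 g hg]
    have h := hsmall g z
    rwa [hrep] at h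
  -- T7 : ψ_y (g·y) = g for g ∈ G
  have T7a : ∀ g ∈ Set.range (mul s one), ∀ y : S, psi sinv y (mul s g y) = g := by
    intro g hg y
    have h : s (g, y) = (mul s g y, y) := by rw [hsmk, hθG g hg y]
    exact (hdet g y _ _ h).1
  -- K10 : ψ_{x·y} = ψ_x ∘ ψ_y
  have K10 : ∀ x y u : S, psi sinv (mul s x y) u = psi sinv x (psi sinv y u) := by
    intro x y u
    have hc : s (psi sinv x (psi sinv y u),
        mul s (circ sinv x (psi sinv y u)) (circ sinv y u)) = (u, mul s x y) := by
      rw [hsmk, Prod.mk.injEq]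
      constructor
      · rw [← asc, B1 (psi sinv y u) x, B1 u y]
      · have h := hA2 (psi sinv x (psi sinv y u)) (circ sinv x (psi sinv y u)) (circ sinv y u)
        rw [B2 (psi sinv y u) x, B1 (psi sinv y u) x, B2 u y] at h
        exact h.symm
    exact (hdet _ _ _ _ hc).1
  -- A package
  have K3 : ∀ e : S, mul s e e = e → ∀ z, theta s e (theta s (ainv e) z) = z := by
    intro e he z
    obtain ⟨-, hee', -⟩ := hainv e he
    have hp := hB (ainv e) e
    rw [hee'] at hp
    -- hp : s (psi sinv e (ainv e), one) = (ainv e, e)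
    have h1 : mul s (psi sinv e (ainv e)) one = ainv e := congrArg (fun q => q.1) hp
    have h2 : theta s (psi sinv e (ainv e)) one = e := congrArg (fun q => q.2) hp
    have h := E4 (psi sinv e (ainv e)) z
    rwa [h1, h2] at h
  have K3f : ∀ e : S, mul s e e = e → ∀ z, theta s (ainv e) (theta s e z) = z :=
    fun e he => flip _ _ (K3 e he)
  have injθ : ∀ e : S, mul s e e = e → ∀ a b : S, theta s e a = theta s e b → a = b := by
    intro e he a b h
    have h2 := congrArg (theta s (ainv e)) h
    rwa [K3f e he a, K3f e he b] at h2
  have K4 : ∀ e : S, mul s e e = e → theta s e e = one := by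
    intro e he
    have hff : mul s (theta s e e) (theta s e e) = theta s e e := by
      have h := hA2 e e e
      rw [he] at h
      exact h
    have hTf : ∀ z, theta s (theta s e e) z = z := by
      intro z
      have h := hA3 e e (theta s (ainv e) z)
      rw [he, K3 e he z] at h
      exact h
    exact huniq _ hff (funext hTf)
  -- 1∘e = e  and  ψ_1 e = e
  have hcirc1e : ∀ e : S, mul s e e = e → circ sinv one e = e := by
    intro e he
    have h : s (e, e) = (e, one) := by rw [hsmk, he, K4 e he]
    exact (hdet _ _ _ _ h).2
  have Q5 : ∀ e : S, mul s e e = e → theta s e one = ainv e := by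
    intro e he
    obtain ⟨he', -, -⟩ := hainv e he
    have h := K4 (ainv e) he'
    calc theta s e one = theta s e (theta s (ainv e) (ainv e)) := by rw [h]
      _ = ainv e := K3 e he (ainv e)
  -- 1·e = 1
  have hCb : ∀ e : S, mul s e e = e → mul s one e = one := by
    intro e he
    have hidem : ∀ u, psi sinv e (psi sinv e u) = psi sinv e u := by
      intro u
      have h := K10 e e u
      rw [he] at h
      exact h.symm
    have hfixG : ∀ g ∈ Set.range (mul s one), psi sinv e g = g := by
      intro g hg
      have h1 := T7a g hg e
      calc psi sinv e g = psi sinv e (psi sinv e (mul s g e)) := by rw [h1]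
        _ = psi sinv e (mul s g e) := hidem _
        _ = g := h1
    have hmem : mul s one e ∈ Set.range (mul s one) := ⟨e, rfl⟩
    have h1 : s (one, e) = (mul s one e, e) := by rw [hsmk, hT1 e]
    have h2 : psi sinv e (mul s one e) = one := (hdet _ _ _ _ h1).1
    rw [← hfixG _ hmem, h2]
  have K14 : ∀ e : S, mul s e e = e → mul s e one = e := by
    intro e he
    obtain ⟨he', -, -⟩ := hainv e he
    have h := hA2 e e one
    rw [K4 e he, he, Q5 e he, hCb (ainv e) he'] at h
    -- h : one = theta s e (mul s e one)
    have h2 : theta s e (mul s e one) = theta s e e := by rw [← h, K4 e he]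
    exact injθ e he _ _ h2
  -- e∘1 = e and ψ_e 1 = 1
  have hcirce1 : ∀ e : S, mul s e e = e → circ sinv e one = e := by
    intro e he
    have h : s (one, e) = (one, e) := by rw [hsmk, hT1 e, hCb e he]
    exact (hdet _ _ _ _ h).2
  have hpsie1 : ∀ e : S, mul s e e = e → psi sinv e one = one := by
    intro e he
    have h : s (one, e) = (one, e) := by rw [hsmk, hT1 e, hCb e he]
    exact (hdet _ _ _ _ h).1
  -- inverse PE machinery for ∘-associativity
  have key' : ∀ q : S × S × S, s23 s (s13 s (s12 s q)) = s12 s (s23 s q) :=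
    fun q => congrFun hPE q
  have h12a : ∀ p : S × S × S, s12 sinv (s12 s p) = p := by
    rintro ⟨x, y, z⟩
    show ((sinv (s (x, y))).1, (sinv (s (x, y))).2, z) = (x, y, z)
    rw [hinv₁ (x, y)]
  have h12b : ∀ p : S × S × S, s12 s (s12 sinv p) = p := by
    rintro ⟨x, y, z⟩
    show ((s (sinv (x, y))).1, (s (sinv (x, y))).2, z) = (x, y, z)
    rw [hinv₂ (x, y)]
  have h13a : ∀ p : S × S × S, s13 sinv (s13 s p) = p := by
    rintro ⟨x, y, z⟩
    show ((sinv (s (x, z))).1, y, (sinv (s (x, z))).2) = (x, y, z)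
    rw [hinv₁ (x, z)]
  have h13b : ∀ p : S × S × S, s13 s (s13 sinv p) = p := by
    rintro ⟨x, y, z⟩
    show ((s (sinv (x, z))).1, y, (s (sinv (x, z))).2) = (x, y, z)
    rw [hinv₂ (x, z)]
  have h23a : ∀ p : S × S × S, s23 sinv (s23 s p) = p := by
    rintro ⟨x, y, z⟩
    show (x, sinv (s (y, z))) = (x, y, z)
    rw [hinv₁ (y, z)]
  have h23b : ∀ p : S × S × S, s23 s (s23 sinv p) = p := by
    rintro ⟨x, y, z⟩
    show (x, s (sinv (y, z))) = (x, y, z)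
    rw [hinv₂ (y, z)]
  have hPEinv : ∀ w : S × S × S,
      s12 sinv (s13 sinv (s23 sinv w)) = s23 sinv (s12 sinv w) := by
    intro w
    have hleft : ∀ p : S × S × S,
        s12 sinv (s13 sinv (s23 sinv (s23 s (s13 s (s12 s p))))) = p := by
      intro p
      rw [h23a, h13a, h12a]
    have h1 : s23 s (s13 s (s12 s (s12 sinv (s13 sinv (s23 sinv w))))) = w := by
      rw [h12b, h13b, h23b]
    have h2 : s23 s (s13 s (s12 s (s23 sinv (s12 sinv w)))) = w := by
      rw [key', h23b, h12b]
    have h3 := congrArg (fun t => s12 sinv (s13 sinv (s23 sinv t))) (h1.trans h2.symm)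
    simpa only [hleft] using h3
  -- D1 : (z∘y)∘x = z∘(y∘x)
  have D1 : ∀ x y z : S, circ sinv (circ sinv z y) x = circ sinv z (circ sinv y x) :=
    fun x y z => congrArg (fun q => q.2.2) (hPEinv (x, y, z))
  -- ainv is involutive on A
  have hAinvA : ∀ e : S, mul s e e = e → mul s (ainv e) (ainv e) = ainv e :=
    fun e he => (hainv e he).1
  have hii : ∀ e : S, mul s e e = e → ainv (ainv e) = e := by
    intro e he
    obtain ⟨he', hee', he'e⟩ := hainv e he
    obtain ⟨he'', he'e'', he''e'⟩ := hainv (ainv e) he'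
    calc ainv (ainv e) = circ sinv one (ainv (ainv e)) := (hcirc1e _ he'').symm
      _ = circ sinv (circ sinv e (ainv e)) (ainv (ainv e)) := by rw [hee']
      _ = circ sinv e (circ sinv (ainv e) (ainv (ainv e))) := D1 _ _ _
      _ = circ sinv e one := by rw [he'e'']
      _ = e := hcirce1 e he
  -- K9 : θ_{v∘u} = θ_v θ_u
  have K9 : ∀ v u z : S, theta s (circ sinv v u) z = theta s v (theta s u z) := by
    intro v u z
    have h := hA3 (psi sinv v u) (circ sinv v u) z
    rw [B2 u v, B1 u v] at h
    exact h.symm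
  -- K11 : e·θ_{e'}(z) = θ_{e'}(1·z)
  have K11 : ∀ e : S, mul s e e = e →
      ∀ z, mul s e (theta s (ainv e) z) = theta s (ainv e) (mul s one z) := by
    intro e he z
    apply injθ e he
    have h := hA2 e e (theta s (ainv e) z)
    rw [he, K4 e he, K3 e he z] at h
    rw [h.symm]
    rw [K3 e he (mul s one z)]
  -- K12 : e∘f = θ_{f'}(e)
  have K12 : ∀ e : S, mul s e e = e → ∀ f, mul s f f = f →
      circ sinv e f = theta s (ainv f) e := by
    intro e he f hf
    have h : s (f, theta s (ainv f) e) = (f, e) := by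
      rw [hsmk, Prod.mk.injEq]
      constructor
      · rw [K11 f hf e, hCb e he, Q5 (ainv f) (hAinvA f hf), hii f hf]
      · exact K3 f hf e
    exact (hdet _ _ _ _ h).2
  -- A is closed under ∘
  have hAc : ∀ e : S, mul s e e = e → ∀ f, mul s f f = f →
      mul s (circ sinv e f) (circ sinv e f) = circ sinv e f := by
    intro e he f hf
    have hc : circ sinv e f = theta s (ainv f) e := K12 e he f hf
    have hinjc : ∀ a b : S, theta s (circ sinv e f) a = theta s (circ sinv e f) b → a = b := by
      intro a b h
      rw [K9, K9] at h
      exact injθ f hf _ _ (injθ e he _ _ h)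
    have hstep3 : theta s (mul s (ainv f) e) e = circ sinv e f := by
      apply hinjc
      have h1 := hA3 (ainv f) e e
      rw [← hc] at h1
      rw [h1, K4 e he, K9]
      rw [hc, K3 f hf e, K4 e he]
    calc mul s (circ sinv e f) (circ sinv e f)
        = mul s (theta s (ainv f) e) (theta s (mul s (ainv f) e) e) := by rw [← hc, hstep3]
      _ = theta s (ainv f) (mul s e e) := hA2 _ _ _
      _ = circ sinv e f := by rw [he, hc]
  -- uniqueness of ∘-inverses on A, anti-involution
  have hinv_unique : ∀ c : S, mul s c c = c → ∀ t, mul s t t = t →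
      circ sinv t c = one → t = ainv c := by
    intro c hc t ht h
    obtain ⟨hc', hcc', hc'c⟩ := hainv c hc
    calc t = circ sinv t one := (hcirce1 t ht).symm
      _ = circ sinv t (circ sinv c (ainv c)) := by rw [hcc']
      _ = circ sinv (circ sinv t c) (ainv c) := (D1 _ _ _).symm
      _ = circ sinv one (ainv c) := by rw [h]
      _ = ainv c := hcirc1e _ hc'
  have hanti : ∀ p : S, mul s p p = p → ∀ q, mul s q q = q →
      ainv (circ sinv p q) = circ sinv (ainv q) (ainv p) := by
    intro p hp q hq
    obtain ⟨hp', hpp', hp'p⟩ := hainv p hp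
    obtain ⟨hq', hqq', hq'q⟩ := hainv q hq
    have hc : mul s (circ sinv p q) (circ sinv p q) = circ sinv p q := hAc p hp q hq
    have ht : mul s (circ sinv (ainv q) (ainv p)) (circ sinv (ainv q) (ainv p))
        = circ sinv (ainv q) (ainv p) := hAc (ainv q) hq' (ainv p) hp'
    have hprod : circ sinv (circ sinv (ainv q) (ainv p)) (circ sinv p q) = one := by
      calc circ sinv (circ sinv (ainv q) (ainv p)) (circ sinv p q)
          = circ sinv (ainv q) (circ sinv (ainv p) (circ sinv p q)) := D1 _ _ _
        _ = circ sinv (ainv q) (circ sinv (circ sinv (ainv p) p) q) := by rw [D1]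
        _ = circ sinv (ainv q) (circ sinv one q) := by rw [hp'p]
        _ = circ sinv (ainv q) q := by rw [hcirc1e q hq]
        _ = one := hq'q
    exact (hinv_unique _ hc _ ht hprod).symm
  -- θ is injective on A
  have hθinjA : ∀ E : S, mul s E E = E → ∀ F, mul s F F = F →
      (∀ z, theta s E z = theta s F z) → E = F := by
    intro E hE F hF h
    obtain ⟨hF', hFF', hF'F⟩ := hainv F hF
    have hcA : mul s (circ sinv E (ainv F)) (circ sinv E (ainv F)) = circ sinv E (ainv F) :=
      hAc E hE (ainv F) hF'
    have hTc : ∀ z, theta s (circ sinv E (ainv F)) z = z := by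
      intro z
      rw [K9, h (theta s (ainv F) z)]
      exact K3 F hF z
    have hone2 : circ sinv E (ainv F) = one := huniq _ hcA (funext hTc)
    have h2 : circ sinv (circ sinv E (ainv F)) F = E := by
      rw [D1, hF'F, hcirce1 E hE]
    rw [hone2, hcirc1e F hF] at h2
    exact h2.symm
  -- M2 : (θ_Y Z) ∘ (θ_X (Y·Z)) = θ_{X·Y} Z
  have M2 : ∀ X Y Z : S,
      circ sinv (theta s Y Z) (theta s X (mul s Y Z)) = theta s (mul s X Y) Z := by
    intro X Y Z
    have h : s (theta s X Y, theta s (mul s X Y) Z) = (theta s X (mul s Y Z), theta s Y Z) := by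
      rw [hsmk, Prod.mk.injEq]
      exact ⟨hA2 X Y Z, hA3 X Y Z⟩
    exact (hdet _ _ _ _ h).2
  -- K20 : (1·w)⁻¹ · w = 1
  have K20 : ∀ w : S, mul s (ginv (mul s one w)) w = one := by
    intro w
    have hmemh : mul s one w ∈ Set.range (mul s one) := ⟨w, rfl⟩
    obtain ⟨hg1mem, hhg, hgh⟩ := hginv (mul s one w) hmemh
    calc mul s (ginv (mul s one w)) w
        = mul s one (mul s (ginv (mul s one w)) w) := by
          rw [← asc, hG1 _ hg1mem]
      _ = mul s (mul s (ginv (mul s one w)) (mul s one w)) (mul s (ginv (mul s one w)) w) := by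
          rw [hgh]
      _ = mul s (ginv (mul s one w)) (mul s (mul s one w) (mul s (ginv (mul s one w)) w)) := by
          rw [asc]
      _ = mul s (ginv (mul s one w)) (mul s (mul s (mul s one w) (ginv (mul s one w))) w) := by
          rw [← asc (mul s one w) (ginv (mul s one w)) w]
      _ = mul s (ginv (mul s one w)) (mul s one w) := by rw [hhg]
      _ = one := hgh
  -- (p·x)·1 = p·x for x ∈ G
  have hp1 : ∀ p : S, ∀ x ∈ Set.range (mul s one), mul s (mul s p x) one = mul s p x := by
    intro p x hx
    rw [asc, hg1 x hx]
  -- δ reduction : δ x a = ainv (θ_{a·x}(1))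
  have hδ : ∀ a : S, mul s a a = a → ∀ x ∈ Set.range (mul s one),
      ainv (circ sinv one (psi sinv (ginv x) (ainv a))) = ainv (theta s (mul s a x) one) := by
    intro a ha x hx
    obtain ⟨hx'G, hxx', hx'x⟩ := hginv x hx
    have hA : s (theta s a x, theta s (mul s a x) (ginv x)) = (ainv a, ginv x) := by
      rw [hsmk, Prod.mk.injEq]
      constructor
      · rw [hA2 a x (ginv x), hxx', Q5 a ha]
      · rw [hA3 a x (ginv x), hθG x hx]
    have hApsi : psi sinv (ginv x) (ainv a) = theta s a x := (hdet _ _ _ _ hA).1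
    have hBc : s (theta s a x, theta s (mul s a x) one) = (theta s a x, one) := by
      rw [hsmk, Prod.mk.injEq]
      constructor
      · rw [hA2 a x one, hg1 x hx]
      · rw [hA3 a x one, hθG x hx]
    have hBcirc : circ sinv one (theta s a x) = theta s (mul s a x) one := (hdet _ _ _ _ hBc).2
    rw [hApsi, hBcirc]
  -- d := θ_{p}(1) is idempotent when p·1 = p
  have hdA : ∀ p : S, mul s p one = p →
      mul s (theta s p one) (theta s p one) = theta s p one := by
    intro p hp
    have h := hA2 p one one
    rw [hone, hp] at h
    exact h
  -- θ_d (θ_p t) = t  when p·1 = p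
  have hEd : ∀ p : S, mul s p one = p → ∀ t, theta s (theta s p one) (theta s p t) = t := by
    intro p hp t
    have h := E4 p t
    rwa [hp] at h
  -- θ_{ainv (θ_p 1)} = θ_p pointwise, when p·1 = p
  have hTd : ∀ p : S, mul s p one = p → ∀ z,
      theta s (ainv (theta s p one)) z = theta s p z := by
    intro p hp z
    have hd : mul s (theta s p one) (theta s p one) = theta s p one := hdA p hp
    apply injθ (theta s p one) hd
    rw [K3 (theta s p one) hd z, hEd p hp z]
  -- Identity for goal 3
  have G3id : ∀ a : S, mul s a a = a → ∀ b, mul s b b = b → ∀ x : S,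
      mul s one (theta s (circ sinv a b) x)
      = mul s one (theta s a (mul s one (theta s b x))) := by
    intro a ha b hb x
    obtain ⟨ha', -, -⟩ := hainv a ha
    have h1 : theta s a (mul s one (theta s b x))
        = mul s (ainv a) (theta s a (theta s b x)) := by
      have h := hA2 a one (theta s b x)
      rw [K14 a ha, Q5 a ha] at h
      exact h.symm
    rw [h1, ← asc one (ainv a) (theta s a (theta s b x)), hCb (ainv a) ha', K9]
  -- Identity for goal 5
  have G5id : ∀ a : S, mul s a a = a → ∀ x ∈ Set.range (mul s one), ∀ y : S,
      mul s one (theta s a (mul s x y)) =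
      mul s (mul s one (theta s a x))
        (mul s one (theta s (ainv (theta s (mul s a x) one)) y)) := by
    intro a ha x hx y
    have hmem : mul s one (theta s a x) ∈ Set.range (mul s one) := ⟨_, rfl⟩
    rw [hTd (mul s a x) (hp1 a x hx) y, ← hA2 a x y,
      ← asc one (theta s a x) (theta s (mul s a x) y),
      ← asc (mul s one (theta s a x)) one (theta s (mul s a x) y), hg1 _ hmem]
  -- Identity for goal 4
  have G4id : ∀ a : S, mul s a a = a → ∀ x ∈ Set.range (mul s one),
      ∀ y ∈ Set.range (mul s one),
      theta s (mul s a (mul s x y)) one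
      = theta s (mul s (ainv (theta s (mul s a x) one)) y) one := by
    intro a ha x hx y hy
    have hA3Py : ∀ t, theta s (theta s (mul s a x) y)
        (theta s (mul s (mul s a x) y) t) = t := by
      intro t
      rw [hA3, hθG y hy]
    have hflipPy := flip _ _ hA3Py
    have hinjW : ∀ u v : S, theta s (theta s (mul s a x) y) u
        = theta s (theta s (mul s a x) y) v → u = v := by
      intro u v h
      have h2 := congrArg (theta s (mul s (mul s a x) y)) h
      rwa [hflipPy, hflipPy] at h2
    have e1 : theta s (theta s (mul s a x) y)
        (theta s (mul s (mul s a x) y) one) = one := hA3Py one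
    have e2 : theta s (theta s (mul s a x) y)
        (theta s (mul s (ainv (theta s (mul s a x) one)) y) one) = one := by
      have h := hA3 (ainv (theta s (mul s a x) one)) y one
      rw [hTd (mul s a x) (hp1 a x hx) y] at h
      rw [h, hθG y hy]
    rw [← asc a x y]
    exact hinjW _ _ (e1.trans e2.symm)
  -- δ at one
  have hδone : ∀ a : S, mul s a a = a →
      ainv (circ sinv one (psi sinv (ginv one) (ainv a))) = a := by
    intro a ha
    rw [hδ a ha one honeG, K14 a ha, Q5 a ha]
    exact hii a ha
  -- Identity for goal 6
  have G6id : ∀ a : S, mul s a a = a → ∀ b, mul s b b = b →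
      ∀ x ∈ Set.range (mul s one),
      theta s (mul s (circ sinv a b) x) one
      = circ sinv (theta s (mul s b x) one)
          (theta s (mul s a (mul s one (theta s b x))) one) := by
    intro a ha b hb x hx
    have hcA : mul s (circ sinv a b) (circ sinv a b) = circ sinv a b := hAc a ha b hb
    have hkG : mul s one (theta s b x) ∈ Set.range (mul s one) := ⟨_, rfl⟩
    obtain ⟨hkinvG, hkk', hk'k⟩ := hginv (mul s one (theta s b x)) hkG
    -- M14 : θ_a (θ_b x) = (θ_b x) ∘ θ_{a·k}(1)
    have M14 : theta s a (theta s b x)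
        = circ sinv (theta s b x)
            (theta s (mul s a (mul s one (theta s b x))) one) := by
      have h := M2 (mul s a (mul s one (theta s b x)))
        (ginv (mul s one (theta s b x))) (theta s b x)
      rw [hθG _ hkinvG, K20 (theta s b x),
        asc a (mul s one (theta s b x)) (ginv (mul s one (theta s b x))), hkk',
        K14 a ha] at h
      exact h.symm
    have hEdA : ∀ t, theta s (theta s (mul s a (mul s one (theta s b x))) one)
        (theta s (mul s a (mul s one (theta s b x))) t) = t :=
      hEd _ (hp1 a _ hkG)
    have hEdB : ∀ t, theta s (theta s (mul s b x) one)
        (theta s (mul s b x) t) = t := hEd _ (hp1 b x hx)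
    have hEdL : ∀ t, theta s (theta s (mul s (circ sinv a b) x) one)
        (theta s (mul s (circ sinv a b) x) t) = t := hEd _ (hp1 _ x hx)
    have hflipL := flip _ _ hEdL
    have hA3cx : ∀ t, theta s (theta s (circ sinv a b) x)
        (theta s (mul s (circ sinv a b) x) t) = t := by
      intro t
      rw [hA3, hθG x hx]
    have hflipcx := flip _ _ hA3cx
    have hinjcx : ∀ u v : S, theta s (theta s (circ sinv a b) x) u
        = theta s (theta s (circ sinv a b) x) v → u = v := by
      intro u v h
      have h2 := congrArg (theta s (mul s (circ sinv a b) x)) h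
      rwa [hflipcx, hflipcx] at h2
    have V3 : ∀ z, theta s (mul s a (mul s one (theta s b x)))
        (theta s (mul s b x) z) = theta s (mul s (circ sinv a b) x) z := by
      intro z
      apply hinjcx
      rw [hA3cx z]
      rw [show theta s (circ sinv a b) x = theta s a (theta s b x) from K9 a b x]
      rw [M14, K9, hEdA]
      rw [hA3, hθG x hx]
    apply hθinjA _ (hdA _ (hp1 _ x hx)) _
      (hAc _ (hdA _ (hp1 b x hx)) _ (hdA _ (hp1 a _ hkG)))
    intro t
    rw [K9]
    obtain ⟨z₀, hz₀⟩ : ∃ z₀, theta s (mul s (circ sinv a b) x) z₀ = t :=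
      ⟨theta s (theta s (mul s (circ sinv a b) x) one) t, hflipL t⟩
    rw [← hz₀, hEdL z₀, ← V3 z₀, hEdA, hEdB]
  -- unfolded goal-4 statement
  have G4δ : ∀ x ∈ Set.range (mul s one), ∀ y ∈ Set.range (mul s one),
      ∀ a : S, mul s a a = a →
      ainv (circ sinv one (psi sinv (ginv (mul s x y)) (ainv a)))
      = ainv (circ sinv one (psi sinv (ginv y)
          (ainv (ainv (circ sinv one (psi sinv (ginv x) (ainv a))))))) := by
    intro x hx y hy a ha
    have hxyG := hmulG x hx y hy
    have hdmem : mul s (theta s (mul s a x) one) (theta s (mul s a x) one)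
        = theta s (mul s a x) one := hdA _ (hp1 a x hx)
    have hdx : mul s (ainv (theta s (mul s a x) one)) (ainv (theta s (mul s a x) one))
        = ainv (theta s (mul s a x) one) := hAinvA _ hdmem
    rw [hδ a ha x hx, hδ a ha (mul s x y) hxyG, hδ _ hdx y hy]
    exact congrArg ainv (G4id a ha x hx y hy)
  -- assemble
  intro A G σ δ
  refine ⟨?_, ?_, ?_, ?_, ?_, ?_⟩
  · -- goal 1 : σ a bijective on G
    intro a ha
    have ha' : mul s a a = a := ha
    obtain ⟨ha'', haa', ha'a⟩ := hainv a ha'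
    have hmf : Set.MapsTo (σ a) G G := fun x _ => ⟨_, rfl⟩
    have hmg : Set.MapsTo (σ (ainv a)) G G := fun x _ => ⟨_, rfl⟩
    refine Set.InvOn.bijOn ⟨?_, ?_⟩ hmf hmg
    · intro x hxG
      show mul s one (theta s (ainv a) (mul s one (theta s a x))) = x
      rw [← G3id (ainv a) ha'' a ha' x, ha'a, hT1 x]
      exact hG1 x hxG
    · intro x hxG
      show mul s one (theta s a (mul s one (theta s (ainv a) x))) = x
      rw [← G3id a ha' (ainv a) ha'' x, haa', hT1 x]
      exact hG1 x hxG
  · -- goal 2 : δ x bijective on A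
    intro x hx
    obtain ⟨hx'G, hxx', hx'x⟩ := hginv x hx
    have hmf : Set.MapsTo (δ x) A A := by
      intro a ha
      have ha' : mul s a a = a := ha
      show mul s (ainv (circ sinv one (psi sinv (ginv x) (ainv a))))
          (ainv (circ sinv one (psi sinv (ginv x) (ainv a))))
        = ainv (circ sinv one (psi sinv (ginv x) (ainv a)))
      rw [hδ a ha' x hx]
      exact hAinvA _ (hdA _ (hp1 a x hx))
    have hmg : Set.MapsTo (δ (ginv x)) A A := by
      intro a ha
      have ha' : mul s a a = a := ha
      show mul s (ainv (circ sinv one (psi sinv (ginv (ginv x)) (ainv a))))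
          (ainv (circ sinv one (psi sinv (ginv (ginv x)) (ainv a))))
        = ainv (circ sinv one (psi sinv (ginv (ginv x)) (ainv a)))
      rw [hδ a ha' (ginv x) hx'G]
      exact hAinvA _ (hdA _ (hp1 a (ginv x) hx'G))
    refine Set.InvOn.bijOn ⟨?_, ?_⟩ hmf hmg
    · intro a ha
      have ha' : mul s a a = a := ha
      show ainv (circ sinv one (psi sinv (ginv (ginv x))
          (ainv (ainv (circ sinv one (psi sinv (ginv x) (ainv a))))))) = a
      rw [← G4δ x hx (ginv x) hx'G a ha', hxx']
      exact hδone a ha'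
    · intro a ha
      have ha' : mul s a a = a := ha
      show ainv (circ sinv one (psi sinv (ginv x)
          (ainv (ainv (circ sinv one (psi sinv (ginv (ginv x)) (ainv a))))))) = a
      rw [← G4δ (ginv x) hx'G x hx a ha', hx'x]
      exact hδone a ha'
  · -- goal 3
    intro a ha b hb x _
    exact G3id a ha b hb x
  · -- goal 4
    intro x hx y hy a ha
    exact G4δ x hx y hy a ha
  · -- goal 5
    intro a ha x hx y _
    show mul s one (theta s a (mul s x y))
      = mul s (mul s one (theta s a x))
          (mul s one (theta s (ainv (circ sinv one (psi sinv (ginv x) (ainv a)))) y))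
    rw [hδ a ha x hx]
    exact G5id a ha x hx y
  · -- goal 6
    intro x hx a ha b hb
    have ha' : mul s a a = a := ha
    have hb' : mul s b b = b := hb
    have hcA : mul s (circ sinv a b) (circ sinv a b) = circ sinv a b := hAc a ha' b hb'
    have hkG : mul s one (theta s b x) ∈ Set.range (mul s one) := ⟨_, rfl⟩
    show ainv (circ sinv one (psi sinv (ginv x) (ainv (circ sinv a b))))
      = circ sinv
          (ainv (circ sinv one (psi sinv (ginv (mul s one (theta s b x))) (ainv a))))
          (ainv (circ sinv one (psi sinv (ginv x) (ainv b))))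
    rw [hδ (circ sinv a b) hcA x hx, hδ a ha' (mul s one (theta s b x)) hkG,
      hδ b hb' x hx]
    rw [← hanti (theta s (mul s b x) one) (hdA _ (hp1 b x hx))
      (theta s (mul s a (mul s one (theta s b x))) one) (hdA _ (hp1 a _ hkG))]
    exact congrArg ainv (G6id a ha' b hb' x hx)

end PE
end

section
/- Let (A,G,σ,δ) and (A',G',σ',δ') be matched pairs of groups, and let f₁ : A → A' and f₂ : G → G' be group isomorphisms satisfying f₂(σ_a(x)) = σ'_{f₁(a)}(f₂(x)) and f₁(δ_x(a)) = δ'_{f₂(x)}(f₁(a)) for all a ∈ A, x ∈ G. Let s and s' be the associated solutions on A × G and A' × G' given by s((a,x),(b,y)) = ((a,xy), (b(δ_x(a))⁻¹, σ_{δ_x(a)}(y))) and the analogous formula for s'. Then f := f₁ × f₂ is an isomorphism of solutions: f is a bijection from A × G to A' × G' and (f × f) ∘ s = s' ∘ (f × f). -/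
namespace PE

/-- The solution associated to a matched pair of groups `(A, G, σ, δ)`:
`s((a,x),(b,y)) = ((a, xy), (b·(δ_x(a))⁻¹, σ_{δ_x(a)}(y)))`. -/
def mpSol {A G : Type*} [Group A] [Group G] (σ : A → G ≃ G) (δ : G → A ≃ A) :
    (A × G) × (A × G) → (A × G) × (A × G) :=
  fun p =>
    ((p.1.1, p.1.2 * p.2.2),
     (p.2.1 * (δ p.1.2 p.1.1)⁻¹, σ (δ p.1.2 p.1.1) p.2.2))

/-- an isomorphism of matched pairs of groups induces an isomorphism
between the associated solutions to the Pentagon Equation. -/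
theorem statement16 {A G A' G' : Type*} [Group A] [Group G] [Group A'] [Group G']
    (σ : A → G ≃ G) (δ : G → A ≃ A)
    (hσ : ∀ (a b : A) (x : G), σ (a * b) x = σ a (σ b x))
    (hδ : ∀ (x y : G) (a : A), δ (x * y) a = δ y (δ x a))
    (hσδ : ∀ (a : A) (x y : G), σ a (x * y) = σ a x * σ (δ x a) y)
    (hδσ : ∀ (x : G) (a b : A), δ x (a * b) = δ (σ b x) a * δ x b)
    (σ' : A' → G' ≃ G') (δ' : G' → A' ≃ A')
    (hσ' : ∀ (a b : A') (x : G'), σ' (a * b) x = σ' a (σ' b x))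
    (hδ' : ∀ (x y : G') (a : A'), δ' (x * y) a = δ' y (δ' x a))
    (hσδ' : ∀ (a : A') (x y : G'), σ' a (x * y) = σ' a x * σ' (δ' x a) y)
    (hδσ' : ∀ (x : G') (a b : A'), δ' x (a * b) = δ' (σ' b x) a * δ' x b)
    (f₁ : A ≃* A') (f₂ : G ≃* G')
    (hf₂ : ∀ (a : A) (x : G), f₂ (σ a x) = σ' (f₁ a) (f₂ x))
    (hf₁ : ∀ (x : G) (a : A), f₁ (δ x a) = δ' (f₂ x) (f₁ a)) :
    Function.Bijective (Prod.map (f₁ : A → A') (f₂ : G → G')) ∧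
    ∀ p : (A × G) × (A × G),
      Prod.map (Prod.map (f₁ : A → A') (f₂ : G → G'))
          (Prod.map (f₁ : A → A') (f₂ : G → G')) (mpSol σ δ p) =
        mpSol σ' δ' (Prod.map (Prod.map (f₁ : A → A') (f₂ : G → G'))
          (Prod.map (f₁ : A → A') (f₂ : G → G')) p) := by
  constructor
  · exact f₁.bijective.prodMap f₂.bijective
  · intro p
    simp [mpSol, Prod.map, hf₁, hf₂, map_mul, map_inv]

end PE
end

section
/- Let (A,G,σ,δ) be a matched pair of groups, X a nonempty set, and for each a ∈ A let φ_a be a permutation of X. Define s' on (X × A × G) × (X × A × G) by s'((α,a,x),(β,b,y)) = ((α, a, xy), (φ⁻¹_{b(δ_x(a))⁻¹}(φ_b(β)), b(δ_x(a))⁻¹, σ_{δ_x(a)}(y))). Then (X × A × G, s') is a bijective set-theoretic solution to the Pentagon Equation. -/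
/-!
Conjugating `s'` by the permutation `(β, b, y) ↦ (φ_b(β), b, y)` of `X × A × G` removes `φ`:
the result is the solution `((a, x), (b, y)) ↦ ((a, xy), (b δₓ(a)⁻¹, σ_{δₓ(a)}(y)))` of the
matched pair on `A × G`, with the `X`-coordinates carried along unchanged. Both operations
preserve the pentagon equation and bijectivity, so it remains to treat the matched-pair
solution. Its pentagon equation follows from the compatibility axioms, and it is inverted
by recovering `δₓ(a)` from `xy`, `a` and `σ_{δₓ(a)}(y)`.
-/

namespace PE

/-- The extension solution on `X × A × G` associated to a matched pair of groups
`(A, G, σ, δ)` and a family of permutations `φ_a` of `X`: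
`s'((α,a,x),(β,b,y)) = ((α, a, xy), (φ⁻¹_{b(δ_x(a))⁻¹}(φ_b(β)), b(δ_x(a))⁻¹, σ_{δ_x(a)}(y)))`. -/
def extSol {A G : Type*} [Group A] [Group G] {X : Type*}
    (σ : A → G ≃ G) (δ : G → A ≃ A) (φ : A → X ≃ X) :
    (X × A × G) × (X × A × G) → (X × A × G) × (X × A × G) :=
  fun p =>
    ((p.1.1, p.1.2.1, p.1.2.2 * p.2.2.2),
     ((φ (p.2.2.1 * (δ p.1.2.2 p.1.2.1)⁻¹)).symm (φ p.2.2.1 p.2.1),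
      p.2.2.1 * (δ p.1.2.2 p.1.2.1)⁻¹,
      σ (δ p.1.2.2 p.1.2.1) p.2.2.2))

section MatchedPair

variable {A G : Type*} {σ : A → G ≃ G} {δ : G → A ≃ A}

theorem sigma_one_apply [Monoid A] (hσ : ∀ (a b : A) (x : G), σ (a * b) x = σ a (σ b x))
    (x : G) : σ 1 x = x :=
  (σ 1).injective (by rw [← hσ, one_mul])

theorem sigma_inv_apply_apply [Group A] (hσ : ∀ (a b : A) (x : G), σ (a * b) x = σ a (σ b x))
    (a : A) (x : G) : σ a⁻¹ (σ a x) = x := by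
  rw [← hσ, inv_mul_cancel, sigma_one_apply hσ]

theorem delta_one_apply [Monoid G] (hδ : ∀ (x y : G) (a : A), δ (x * y) a = δ y (δ x a))
    (a : A) : δ 1 a = a :=
  (δ 1).injective (by rw [← hδ, one_mul])

theorem delta_inv_apply_apply [Group G] (hδ : ∀ (x y : G) (a : A), δ (x * y) a = δ y (δ x a))
    (x : G) (a : A) : δ x⁻¹ (δ x a) = a := by
  rw [← hδ, mul_inv_cancel, delta_one_apply hδ]

theorem delta_apply_inv_apply [Group G] (hδ : ∀ (x y : G) (a : A), δ (x * y) a = δ y (δ x a))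
    (x : G) (a : A) : δ x (δ x⁻¹ a) = a := by
  simpa using delta_inv_apply_apply hδ x⁻¹ a

theorem delta_apply_one [Group A] (hσ : ∀ (a b : A) (x : G), σ (a * b) x = σ a (σ b x))
    (hδσ : ∀ (x : G) (a b : A), δ x (a * b) = δ (σ b x) a * δ x b) (x : G) :
    δ x 1 = 1 := by
  simpa [sigma_one_apply hσ] using hδσ x 1 1

theorem delta_sigma_apply_inv [Group A] (hσ : ∀ (a b : A) (x : G), σ (a * b) x = σ a (σ b x))
    (hδσ : ∀ (x : G) (a b : A), δ x (a * b) = δ (σ b x) a * δ x b) (x : G) (a : A) :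
    δ (σ a x) a⁻¹ = (δ x a)⁻¹ :=
  eq_inv_of_mul_eq_one_left <| by rw [← hδσ, inv_mul_cancel, delta_apply_one hσ hδσ]

def matchedSol [Group A] [Mul G] (σ : A → G ≃ G) (δ : G → A ≃ A) :
    (A × G) × (A × G) → (A × G) × (A × G) :=
  fun ((a, x), (b, y)) => ((a, x * y), (b * (δ x a)⁻¹, σ (δ x a) y))

theorem isPE_matchedSol [Group A] [Group G]
    (hσ : ∀ (a b : A) (x : G), σ (a * b) x = σ a (σ b x))
    (hδ : ∀ (x y : G) (a : A), δ (x * y) a = δ y (δ x a))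
    (hσδ : ∀ (a : A) (x y : G), σ a (x * y) = σ a x * σ (δ x a) y)
    (hδσ : ∀ (x : G) (a b : A), δ x (a * b) = δ (σ b x) a * δ x b) :
    IsPE (matchedSol σ δ) := by
  funext ⟨⟨a, x⟩, ⟨b, y⟩, ⟨c, z⟩⟩
  simp only [Function.comp_apply, s12, s13, s23, matchedSol, Prod.mk.injEq, true_and]
  have hd : δ (σ (δ x a) y) (b * (δ x a)⁻¹) = δ y b * (δ (x * y) a)⁻¹ := by
    rw [hδ, eq_mul_inv_iff_mul_eq, ← hδσ, inv_mul_cancel_right]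
  refine ⟨mul_assoc x y z, ?_, ?_, ?_⟩
  · rw [hδ, hσδ]
  · rw [hd]; group
  · rw [hd, ← hσ, inv_mul_cancel_right]

/-- `e` is `δₓ(a)⁻¹`, since `δ_{xy}(a) = (δ_{σ_{δₓ(a)}(y)}(δₓ(a)⁻¹))⁻¹`. -/
def matchedSolInv [Group A] [Group G] (σ : A → G ≃ G) (δ : G → A ≃ A) :
    (A × G) × (A × G) → (A × G) × (A × G) :=
  fun ((a, u), (c, z)) =>
    let e := δ z⁻¹ (δ u a)⁻¹
    ((a, u * (σ e z)⁻¹), (c * e⁻¹, σ e z))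

theorem matchedSol_bijective [Group A] [Group G]
    (hσ : ∀ (a b : A) (x : G), σ (a * b) x = σ a (σ b x))
    (hδ : ∀ (x y : G) (a : A), δ (x * y) a = δ y (δ x a))
    (hδσ : ∀ (x : G) (a b : A), δ x (a * b) = δ (σ b x) a * δ x b) :
    Function.Bijective (matchedSol σ δ) := by
  refine Function.bijective_iff_has_inverse.mpr ⟨matchedSolInv σ δ, ?_, ?_⟩
  · rintro ⟨⟨a, x⟩, ⟨b, y⟩⟩
    have he : δ (σ (δ x a) y)⁻¹ (δ (x * y) a)⁻¹ = (δ x a)⁻¹ := by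
      rw [hδ, ← delta_sigma_apply_inv hσ hδσ, delta_inv_apply_apply hδ]
    simp only [matchedSol, matchedSolInv, he, sigma_inv_apply_apply hσ, inv_inv,
      mul_inv_cancel_right, inv_mul_cancel_right]
  · rintro ⟨⟨a, u⟩, ⟨c, z⟩⟩
    simp only [matchedSol, matchedSolInv]
    set e := δ z⁻¹ (δ u a)⁻¹
    have he : δ (u * (σ e z)⁻¹) a = e⁻¹ := by
      apply (δ (σ e z)).injective
      rw [← hδ, inv_mul_cancel_right, delta_sigma_apply_inv hσ hδσ, delta_apply_inv_apply hδ,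
        inv_inv]
    rw [he, inv_inv, inv_mul_cancel_right, inv_mul_cancel_right, sigma_inv_apply_apply hσ]

end MatchedPair

section Transport

variable {S T X : Type*}

def trivialExtension (X : Type*) (s : S × S → S × S) : (X × S) × (X × S) → (X × S) × (X × S) :=
  fun ((α, p), (β, q)) => ((α, (s (p, q)).1), (β, (s (p, q)).2))

theorem IsPE.trivialExtension {s : S × S → S × S} (hs : IsPE s) :
    IsPE (trivialExtension X s) := by
  funext ⟨⟨α, p⟩, ⟨β, q⟩, ⟨γ, r⟩⟩
  have := congrFun hs (p, q, r)
  simp only [Function.comp_apply, s12, s13, s23, PE.trivialExtension, Prod.ext_iff,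
    true_and] at this ⊢
  exact this

theorem bijective_trivialExtension {s : S × S → S × S} (hs : Function.Bijective s) :
    Function.Bijective (trivialExtension X s) :=
  (Equiv.prodProdProdComm X X S S).bijective.comp
    ((Function.bijective_id.prodMap hs).comp (Equiv.prodProdProdComm X S X S).bijective)

theorem IsPE.conj {s : S × S → S × S} (hs : IsPE s) (e : S ≃ T) :
    IsPE (Prod.map e e ∘ s ∘ Prod.map e.symm e.symm) := by
  funext ⟨p, q, r⟩
  have := congrFun hs (e.symm p, e.symm q, e.symm r)
  simp only [Function.comp_apply, s12, s13, s23, Prod.map, Prod.ext_iff,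
    Equiv.symm_apply_apply, EmbeddingLike.apply_eq_iff_eq] at this ⊢
  exact this

theorem bijective_conj {s : S × S → S × S} (hs : Function.Bijective s) (e : S ≃ T) :
    Function.Bijective (Prod.map e e ∘ s ∘ Prod.map e.symm e.symm) :=
  (e.prodCongr e).bijective.comp (hs.comp (e.prodCongr e).symm.bijective)

end Transport

def twistEquiv {A G X : Type*} (φ : A → X ≃ X) : X × A × G ≃ X × A × G where
  toFun := fun (β, b, y) => ((φ b).symm β, b, y)
  invFun := fun (β, b, y) => (φ b β, b, y)
  left_inv := fun _ => by simp
  right_inv := fun _ => by simp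

theorem extSol_eq_conj_trivialExtension {A G X : Type*} [Group A] [Group G]
    (σ : A → G ≃ G) (δ : G → A ≃ A) (φ : A → X ≃ X) :
    extSol σ δ φ = Prod.map (twistEquiv φ) (twistEquiv φ) ∘ trivialExtension X (matchedSol σ δ) ∘
      Prod.map (twistEquiv φ).symm (twistEquiv φ).symm := by
  funext ⟨⟨α, a, x⟩, ⟨β, b, y⟩⟩
  simp [extSol, twistEquiv, trivialExtension, matchedSol]

theorem statement17_general {A G : Type*} [Group A] [Group G] {X : Type*}
    (σ : A → G ≃ G) (δ : G → A ≃ A)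
    (hσ : ∀ (a b : A) (x : G), σ (a * b) x = σ a (σ b x))
    (hδ : ∀ (x y : G) (a : A), δ (x * y) a = δ y (δ x a))
    (hσδ : ∀ (a : A) (x y : G), σ a (x * y) = σ a x * σ (δ x a) y)
    (hδσ : ∀ (x : G) (a b : A), δ x (a * b) = δ (σ b x) a * δ x b)
    (φ : A → X ≃ X) :
    IsPE (extSol σ δ φ) ∧ Function.Bijective (extSol σ δ φ) := by
  rw [extSol_eq_conj_trivialExtension]
  exact ⟨(isPE_matchedSol hσ hδ hσδ hδσ).trivialExtension.conj (twistEquiv φ),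
    bijective_conj (bijective_trivialExtension (matchedSol_bijective hσ hδ hδσ)) (twistEquiv φ)⟩

/-- the extension of the solution associated to a matched pair of groups
`(A, G, σ, δ)` by a nonempty set `X` and permutations `φ_a` of `X` is a bijective
set-theoretic solution to the Pentagon Equation. -/
theorem statement17 {A G : Type*} [Group A] [Group G] {X : Type*} [Nonempty X]
    (σ : A → G ≃ G) (δ : G → A ≃ A)
    (hσ : ∀ (a b : A) (x : G), σ (a * b) x = σ a (σ b x))
    (hδ : ∀ (x y : G) (a : A), δ (x * y) a = δ y (δ x a))
    (hσδ : ∀ (a : A) (x y : G), σ a (x * y) = σ a x * σ (δ x a) y)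
    (hδσ : ∀ (x : G) (a b : A), δ x (a * b) = δ (σ b x) a * δ x b)
    (φ : A → X ≃ X) :
    IsPE (extSol σ δ φ) ∧ Function.Bijective (extSol σ δ φ) :=
  statement17_general σ δ hσ hδ hσδ hδσ φ

end PE
end

section
/- Let (A,G,σ,δ) be a matched pair of groups, X a nonempty set, and let {φ_a : a ∈ A} and {ρ_a : a ∈ A} be two families of permutations of X. Let s_φ and s_ρ be the corresponding extension solutions on X × A × G, i.e. s_φ((α,a,x),(β,b,y)) = ((α, a, xy), (φ⁻¹_{b(δ_x(a))⁻¹}(φ_b(β)), b(δ_x(a))⁻¹, σ_{δ_x(a)}(y))) and analogously for s_ρ. Then the map ξ : X × A × G → X × A × G defined by ξ(α,a,x) = (ρ_a⁻¹(φ_a(α)), a, x) is a bijection satisfying (ξ × ξ) ∘ s_φ = s_ρ ∘ (ξ × ξ); hence s_φ and s_ρ are isomorphic solutions. -/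
namespace PE

/-- two extensions of the solution of a matched pair of groups by the
same set `X` (with different families of permutations `φ`, `ρ`) are isomorphic via
`ξ(α,a,x) = (ρ_a⁻¹(φ_a(α)), a, x)`. -/
theorem statement18 {A G : Type*} [Group A] [Group G] {X : Type*} [Nonempty X]
    (σ : A → G ≃ G) (δ : G → A ≃ A)
    (hσ : ∀ (a b : A) (x : G), σ (a * b) x = σ a (σ b x))
    (hδ : ∀ (x y : G) (a : A), δ (x * y) a = δ y (δ x a))
    (hσδ : ∀ (a : A) (x y : G), σ a (x * y) = σ a x * σ (δ x a) y)
    (hδσ : ∀ (x : G) (a b : A), δ x (a * b) = δ (σ b x) a * δ x b)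
    (φ ρ : A → X ≃ X) :
    let ξ : X × A × G → X × A × G :=
      fun u => ((ρ u.2.1).symm (φ u.2.1 u.1), u.2.1, u.2.2)
    Function.Bijective ξ ∧
    ∀ p : (X × A × G) × (X × A × G),
      Prod.map ξ ξ (extSol σ δ φ p) = extSol σ δ ρ (Prod.map ξ ξ p) := by
  intro ξ
  constructor
  · exact Function.bijective_iff_has_inverse.mpr
      ⟨fun u => ((φ u.2.1).symm (ρ u.2.1 u.1), u.2.1, u.2.2),
       fun u => by simp [ξ], fun u => by simp [ξ]⟩
  · intro p
    simp [ξ, extSol, Prod.map]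

end PE
end

section
/- Let (S,s) be a finite bijective set-theoretic solution to the Pentagon Equation. Then there exist finite groups A and G, a left action σ of A on G by permutations and a right action δ of G on A by permutations making (A,G,σ,δ) a matched pair of groups, a nonempty finite set X, permutations φ_a of X for each a ∈ A, and a bijection F : S → X × A × G such that (F × F) ∘ s = s' ∘ (F × F), where s'((α,a,x),(β,b,y)) = ((α, a, xy), (φ⁻¹_{b(δ_x(a))⁻¹}(φ_b(β)), b(δ_x(a))⁻¹, σ_{δ_x(a)}(y))). That is, every finite bijective solution to the Pentagon Equation is isomorphic to an extension of the solution associated to a matched pair of groups. -/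
open Function

theorem Function.Bijective.finset_fst_eq_of_subset {α β : Type*} [Fintype α]
    {f : α × α → α × α} (hf : Bijective f) (I : α → Finset β) (hI : ∀ p, I (f p).1 ⊆ I p.1)
    (p : α × α) :
    I (f p).1 = I p.1 := by
  have hsum : ∑ q : α × α, (I (f q).1).card = ∑ q : α × α, (I q.1).card :=
    Fintype.sum_bijective f hf _ _ fun _ => rfl
  have hcard := (Finset.sum_eq_sum_iff_of_le fun q _ => Finset.card_le_card (hI q)).1 hsum p
    (Finset.mem_univ _)
  exact Finset.eq_of_subset_of_card_le (hI p) hcard.ge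

theorem Set.MapsTo.mem_of_apply_mem {α : Type*} [Finite α] {f : α → α} (hf : Injective f)
    {A : Set α} (hA : Set.MapsTo f A A) {x : α} (hx : f x ∈ A) : x ∈ A := by
  obtain ⟨a, ha, hax⟩ :=
    ((A.toFinite.injOn_iff_bijOn_of_mapsTo hA).1 hf.injOn).surjOn hx
  exact hf hax ▸ ha

section Semigroup

variable {M : Type*} [Semigroup M]

theorem exists_mul_mul_eq_left_of_bijective [Finite M] {s : M × M → M × M} (hs : Bijective s)
    (hfst : ∀ p, (s p).1 = p.1 * p.2) (x y : M) : ∃ t, x * y * t = x := by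
  classical
  have := Fintype.ofFinite M
  have hI := hs.finset_fst_eq_of_subset
    (fun u => insert u (Finset.univ.image (u * ·))) (fun p w hw => ?_) (x, y)
  · have hx : x ∈ insert (x * y) (Finset.univ.image (x * y * ·)) := by
      rw [← hfst (x, y), hI]
      exact Finset.mem_insert_self _ _
    simp only [Finset.mem_insert, Finset.mem_image, Finset.mem_univ, true_and] at hx
    rcases hx with hx | hx
    · exact ⟨y, by rw [← hx, ← hx]⟩
    · exact hx
  · simp only [hfst, Finset.mem_insert, Finset.mem_image, Finset.mem_univ, true_and] at hw ⊢
    rcases hw with rfl | ⟨t, rfl⟩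
    · exact Or.inr ⟨p.2, rfl⟩
    · exact Or.inr ⟨p.2 * t, (mul_assoc _ _ _).symm⟩

theorem exists_mul_mul_eq_right_of_bijective [Finite M] {s : M × M → M × M} (hs : Bijective s)
    (hfst : ∀ p, (s p).1 = p.1 * p.2) (x y : M) : ∃ t, t * (x * y) = y := by
  let f : M × M ≃ Mᵐᵒᵖ × Mᵐᵒᵖ := MulOpposite.opEquiv.prodCongr MulOpposite.opEquiv
  have : Finite Mᵐᵒᵖ := Finite.of_equiv M MulOpposite.opEquiv
  obtain ⟨t, ht⟩ := exists_mul_mul_eq_left_of_bijective (s := f ∘ s ∘ Prod.swap ∘ f.symm)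
    (f.bijective.comp (hs.comp (Prod.swap_bijective.comp f.symm.bijective)))
    (fun p => by simp [f, hfst]) (MulOpposite.op y) (MulOpposite.op x)
  exact ⟨t.unop, by simpa using congrArg MulOpposite.unop ht⟩

theorem exists_mul_eq_and_mul_eq_of_mul_eq (hR : ∀ x y : M, ∃ t, x * y * t = x)
    (hL : ∀ x y : M, ∃ t, t * (x * y) = y) {x y u q : M} (h : u * q = x * y) :
    ∃ a, x * a = u ∧ a * q = y := by
  obtain ⟨t, ht⟩ := hR (x * y) (x * y)
  obtain ⟨r, hr⟩ := hL (x * y) (x * y)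
  have hreg : x * y * t * (x * y) = x * y := by
    have : x * y * t = r * (x * y) := by
      conv_lhs => rw [← hr]
      rw [mul_assoc r, ht]
    rw [this, mul_assoc, hr]
  obtain ⟨r₁, hr₁⟩ := hR u q
  obtain ⟨r₂, hr₂⟩ := hL x y
  rw [h] at hr₁
  refine ⟨y * t * u, ?_, ?_⟩
  · calc x * (y * t * u) = x * y * t * (x * y * r₁) := by simp only [hr₁, mul_assoc]
      _ = u := by rw [← mul_assoc, hreg, hr₁]
  · calc y * t * u * q = y * t * (x * y) := by rw [mul_assoc _ u, h]
      _ = r₂ * (x * y * t * (x * y)) := by nth_rewrite 1 [← hr₂]; simp only [mul_assoc]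
      _ = y := by rw [hreg, hr₂]

theorem mul_eq_self_of_mul_eq {e : M} (he : ∀ x, x * e = x) {ι : M} (hι : e * ι = e) (x : M) :
    x * ι = x := by
  rw [← he x, mul_assoc, hι]

theorem mul_mul_eq_mul_mul_mul {e : M} (he : ∀ x, x * e = x) (x y : M) :
    e * (x * y) = e * x * (e * y) := by
  simp only [← mul_assoc, he]

def IsLeftSimple (M : Type*) [Mul M] : Prop := ∀ x y : M, ∃ t, t * y = x

namespace IsLeftSimple

noncomputable def div (hM : IsLeftSimple M) (x y : M) : M := Classical.choose (hM x y)

theorem div_mul (hM : IsLeftSimple M) (x y : M) : hM.div x y * y = x :=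
  Classical.choose_spec (hM x y)

theorem mul_left_injective [Finite M] (hM : IsLeftSimple M) (y : M) : Injective (· * y) :=
  Finite.injective_iff_surjective.2 fun x => hM x y

theorem exists_mul_right_identity [Finite M] [Nonempty M] (hM : IsLeftSimple M) :
    ∃ e : M, ∀ x, x * e = x := by
  obtain ⟨a⟩ := ‹Nonempty M›
  refine ⟨hM.div a a, fun x => hM.mul_left_injective a ?_⟩
  simp only [mul_assoc, hM.div_mul]

variable {e : M}

theorem eq_of_mul_self_eq (hM : IsLeftSimple M) {g : M} (hg : e * g = g) (hgg : g * g = g) :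
    g = e := by
  calc g = hM.div e g * g * g := by rw [hM.div_mul, hg]
    _ = e := by rw [mul_assoc, hgg, hM.div_mul]

theorem mul_eq_of_mul_self_eq (hM : IsLeftSimple M) (he : ∀ x, x * e = x) {w : M}
    (hw : w * w = w) : e * w = e :=
  hM.eq_of_mul_self_eq (by rw [← mul_assoc, he]) (by rw [mul_assoc, ← mul_assoc w, he, hw])

theorem mul_div_eq (hM : IsLeftSimple M) (he : ∀ x, x * e = x) {g : M} (hg : e * g = g) :
    g * hM.div e g = e :=
  hM.eq_of_mul_self_eq (by rw [← mul_assoc, hg])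
    (by rw [mul_assoc, ← mul_assoc (hM.div e g), hM.div_mul, ← mul_assoc, he])

noncomputable abbrev group (hM : IsLeftSimple M) (he : ∀ x, x * e = x) :
    Group {g : M // e * g = g} :=
  letI : Mul {g : M // e * g = g} := ⟨fun g h => ⟨g.1 * h.1, by rw [← mul_assoc, g.2]⟩⟩
  letI : One {g : M // e * g = g} := ⟨⟨e, he e⟩⟩
  letI : Inv {g : M // e * g = g} := ⟨fun g => ⟨e * hM.div e g.1, by rw [← mul_assoc, he]⟩⟩
  Group.ofLeftAxioms (fun a b c => Subtype.ext (mul_assoc a.1 b.1 c.1)) (fun a => Subtype.ext a.2)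
    fun a => Subtype.ext (show e * hM.div e a.1 * a.1 = e by rw [mul_assoc, hM.div_mul, he])

noncomputable def idemPart (hM : IsLeftSimple M) (e x : M) : M := x * hM.div e (e * x)

theorem mul_idemPart (hM : IsLeftSimple M) (he : ∀ x, x * e = x) (x : M) :
    e * hM.idemPart e x = e := by
  rw [idemPart, ← mul_assoc, hM.mul_div_eq he (by rw [← mul_assoc, he])]

theorem idemPart_mul_mul (hM : IsLeftSimple M) (he : ∀ x, x * e = x) (x : M) :
    hM.idemPart e x * (e * x) = x := by
  rw [idemPart, mul_assoc, hM.div_mul, he]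

theorem idemPart_mul_of_mul_eq (hM : IsLeftSimple M) (he : ∀ x, x * e = x) {ι g : M}
    (hι : e * ι = e) (hg : e * g = g) : hM.idemPart e (ι * g) = ι := by
  rw [idemPart, ← mul_assoc e, hι, hg, mul_assoc, hM.mul_div_eq he hg, he]

theorem idemPart_of_mul_eq (hM : IsLeftSimple M) (he : ∀ x, x * e = x) {ι : M}
    (hι : e * ι = e) : hM.idemPart e ι = ι := by
  simpa only [he] using hM.idemPart_mul_of_mul_eq he hι (he e)

theorem idemPart_mul (hM : IsLeftSimple M) (he : ∀ x, x * e = x) (x y : M) :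
    hM.idemPart e (x * y) = hM.idemPart e x := by
  conv_lhs => rw [← hM.idemPart_mul_mul he x, mul_assoc]
  exact hM.idemPart_mul_of_mul_eq he (hM.mul_idemPart he x) (by simp only [← mul_assoc, he])

noncomputable def decompEquiv (hM : IsLeftSimple M) (he : ∀ x, x * e = x) :
    M ≃ {ι : M // e * ι = e} × {g : M // e * g = g} where
  toFun x := (⟨hM.idemPart e x, hM.mul_idemPart he x⟩, ⟨e * x, by rw [← mul_assoc, he]⟩)
  invFun p := p.1.1 * p.2.1
  left_inv x := hM.idemPart_mul_mul he x
  right_inv p := Prod.ext (Subtype.ext (hM.idemPart_mul_of_mul_eq he p.1.2 p.2.2))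
    (Subtype.ext (by simp only [← mul_assoc, p.1.2, p.2.2]))

end IsLeftSimple

end Semigroup

namespace PE

structure IsBijectiveSolution {S : Type*} [Semigroup S] (s : S × S → S × S) : Prop where
  fst_eq : ∀ p, (s p).1 = p.1 * p.2
  isPE : IsPE s
  bijective : Bijective s

namespace IsBijectiveSolution

open IsLeftSimple

variable {S : Type*} [Semigroup S] {s : S × S → S × S}

theorem apply_eq (hs : IsBijectiveSolution s) (x y : S) : s (x, y) = (x * y, theta s x y) :=
  Prod.ext (hs.fst_eq _) rfl

theorem theta_mul_theta (hs : IsBijectiveSolution s) (x y z : S) :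
    theta s x y * theta s (x * y) z = theta s x (y * z) := by
  have h := congrFun hs.isPE (x, y, z)
  simp only [comp_apply, s12, s13, s23, hs.apply_eq, Prod.mk.injEq] at h
  exact h.2.1

theorem theta_theta (hs : IsBijectiveSolution s) (x y z : S) :
    theta s (theta s x y) (theta s (x * y) z) = theta s y z := by
  have h := congrFun hs.isPE (x, y, z)
  simp only [comp_apply, s12, s13, s23, hs.apply_eq, Prod.mk.injEq] at h
  exact h.2.2

theorem exists_theta_comp (hs : IsBijectiveSolution s) (u v : S) :
    ∃ w, ∀ z, theta s v (theta s u z) = theta s w z := by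
  obtain ⟨⟨x, y⟩, hxy⟩ := hs.bijective.2 (u, v)
  rw [hs.apply_eq, Prod.mk.injEq] at hxy
  exact ⟨y, fun z => by rw [← hxy.1, ← hxy.2, hs.theta_theta]⟩

variable {e : S}

theorem theta_theta_of_mul_eq (hs : IsBijectiveSolution s) (he : ∀ x, x * e = x) {ι : S}
    (hι : e * ι = e) (x z : S) : theta s (theta s x ι) (theta s x z) = theta s ι z := by
  simpa only [mul_eq_self_of_mul_eq he hι] using hs.theta_theta x ι z

variable [Finite S]

/-- Write `v = θ_x(y)` and `s (u, q) = (x * y, z)`; interchanging the factorisations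
`u * q = x * y` as `u = x * a`, `y = a * q` gives `v = θ_x(a) * θ_{x a}(q) = θ_x(a) * z`. -/
theorem isLeftSimple (hs : IsBijectiveSolution s) : IsLeftSimple S := by
  intro v z
  obtain ⟨⟨x, y⟩, hxy⟩ := hs.bijective.2 (v, v)
  obtain ⟨⟨u, q⟩, huq⟩ := hs.bijective.2 (x * y, z)
  rw [hs.apply_eq, Prod.mk.injEq] at hxy huq
  obtain ⟨a, rfl, rfl⟩ := exists_mul_eq_and_mul_eq_of_mul_eq
    (exists_mul_mul_eq_left_of_bijective hs.bijective hs.fst_eq)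
    (exists_mul_mul_eq_right_of_bijective hs.bijective hs.fst_eq) huq.1
  exact ⟨theta s x a, by rw [← huq.2, hs.theta_mul_theta, hxy.2]⟩

theorem mul_theta_of_mul_eq (hs : IsBijectiveSolution s) (he : ∀ x, x * e = x)
    {ι : S} (hι : e * ι = e) (x : S) : e * theta s x ι = e := by
  apply hs.isLeftSimple.mul_eq_of_mul_self_eq he
  simpa only [mul_eq_self_of_mul_eq he hι] using hs.theta_mul_theta x ι ι

theorem mul_eq_of_mul_theta_eq (hs : IsBijectiveSolution s) (he : ∀ x, x * e = x)
    {x y : S} (h : e * theta s x y = e) : e * y = e :=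
  Set.MapsTo.mem_of_apply_mem (A := {p : S × S | e * p.2 = e}) (x := (x, y)) hs.bijective.1
    (fun p hp => hs.mul_theta_of_mul_eq he hp p.1) h

/-- If `θ_u` identifies `t` and `t'`, so does every `θ_w`, and then so does every `θ_x`
on `y t` and `y t'`. Choosing `y t = e` forces `θ_x(y t') = θ_x(e)` into `E`, hence
`y t' ∈ E ∩ e S = {e}`, and `s (y, t) = s (y, t')`. -/
theorem theta_injective (hs : IsBijectiveSolution s) (he : ∀ x, x * e = x)
    (u : S) : Injective (theta s u) := by
  intro t t' h
  have hM := hs.isLeftSimple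
  have hall : ∀ w, theta s w t = theta s w t' := fun w => by
    obtain ⟨x, rfl⟩ := hM u w
    rw [← hs.theta_theta x w t, h, hs.theta_theta]
  set y := e * hM.div e t
  have hyt : y * t = e := by rw [mul_assoc, hM.div_mul, he]
  have hyt' : y * t' = e := by
    have hE : e * theta s e (y * t') = e := by
      rw [← hs.theta_mul_theta, ← hall, hs.theta_mul_theta, hyt]
      exact hs.mul_theta_of_mul_eq he (he e) e
    calc y * t' = e * (y * t') := by simp only [y, ← mul_assoc, he]
      _ = e := hs.mul_eq_of_mul_theta_eq he hE
  have hst : s (y, t) = s (y, t') := by rw [hs.apply_eq, hs.apply_eq, hyt, hyt', hall]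
  exact congrArg Prod.snd (hs.bijective.1 hst)

theorem theta_bijective (hs : IsBijectiveSolution s) (he : ∀ x, x * e = x)
    (u : S) : Bijective (theta s u) :=
  Finite.injective_iff_bijective.1 (hs.theta_injective he u)

theorem theta_theta_self (hs : IsBijectiveSolution s) (he : ∀ x, x * e = x) {ι : S}
    (hι : e * ι = e) (z : S) : theta s (theta s ι ι) z = z := by
  obtain ⟨w, rfl⟩ := (hs.theta_bijective he ι).2 z
  exact hs.theta_theta_of_mul_eq he hι ι w

theorem theta_eq_mul (hs : IsBijectiveSolution s) (he : ∀ x, x * e = x) (u v : S) :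
    theta s u v = theta s u (hs.isLeftSimple.idemPart e v) * theta s u (e * v) := by
  conv_lhs => rw [← hs.isLeftSimple.idemPart_mul_mul he v]
  rw [← hs.theta_mul_theta, mul_eq_self_of_mul_eq he (hs.isLeftSimple.mul_idemPart he v)]

theorem idemPart_theta (hs : IsBijectiveSolution s) (he : ∀ x, x * e = x) (u v : S) :
    hs.isLeftSimple.idemPart e (theta s u v) = theta s u (hs.isLeftSimple.idemPart e v) := by
  rw [hs.theta_eq_mul he u v, hs.isLeftSimple.idemPart_mul he,
    hs.isLeftSimple.idemPart_of_mul_eq he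
      (hs.mul_theta_of_mul_eq he (hs.isLeftSimple.mul_idemPart he v) u)]

theorem mul_theta_mul (hs : IsBijectiveSolution s) (he : ∀ x, x * e = x) (u v : S) :
    e * theta s u (e * v) = e * theta s u v := by
  rw [hs.theta_eq_mul he u v, ← mul_assoc,
    hs.mul_theta_of_mul_eq he (hs.isLeftSimple.mul_idemPart he v) u]

def thetaSubgroup (hs : IsBijectiveSolution s) (he : ∀ x, x * e = x) :
    Subgroup (Equiv.Perm S) where
  carrier := {a | ∃ u, ⇑a = theta s u}
  mul_mem' := by
    rintro a b ⟨u, hu⟩ ⟨v, hv⟩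
    obtain ⟨w, hw⟩ := hs.exists_theta_comp v u
    exact ⟨w, funext fun z => by rw [Equiv.Perm.coe_mul, comp_apply, hu, hv, hw]⟩
  one_mem' := ⟨theta s e e, funext fun z => (hs.theta_theta_self he (he e) z).symm⟩
  inv_mem' := by
    rintro a ⟨u, hu⟩
    refine ⟨theta s u (theta s e e), funext fun z => ?_⟩
    obtain ⟨w, rfl⟩ := a.surjective z
    rw [Equiv.Perm.inv_def, Equiv.symm_apply_apply, hu,
      hs.theta_theta_of_mul_eq he (hs.mul_theta_of_mul_eq he (he e) e),
      hs.theta_theta_self he (he e)]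

noncomputable def thetaPerm (hs : IsBijectiveSolution s) (he : ∀ x, x * e = x) (u : S) :
    hs.thetaSubgroup he :=
  ⟨Equiv.ofBijective _ (hs.theta_bijective he u), u, rfl⟩

theorem exists_eq_thetaPerm (hs : IsBijectiveSolution s) (he : ∀ x, x * e = x)
    (a : hs.thetaSubgroup he) : ∃ u, a = hs.thetaPerm he u := by
  obtain ⟨a, u, hu⟩ := a
  exact ⟨u, Subtype.ext (Equiv.ext (congrFun hu))⟩

theorem thetaPerm_theta_mul (hs : IsBijectiveSolution s) (he : ∀ x, x * e = x) (x y : S) :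
    hs.thetaPerm he (theta s x y) * hs.thetaPerm he (x * y) = hs.thetaPerm he y :=
  Subtype.ext (Equiv.ext (hs.theta_theta x y))

theorem thetaPerm_theta_mul_of_mul_eq (hs : IsBijectiveSolution s) (he : ∀ x, x * e = x)
    {ι : S} (hι : e * ι = e) (x : S) :
    hs.thetaPerm he (theta s x ι) * hs.thetaPerm he x = hs.thetaPerm he ι :=
  Subtype.ext (Equiv.ext (hs.theta_theta_of_mul_eq he hι x))

noncomputable def idemEquiv (hs : IsBijectiveSolution s) (he : ∀ x, x * e = x) :
    {ι : S // e * ι = e} ≃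
      {χ : S // e * χ = e ∧ ∀ z, theta s χ z = z} × hs.thetaSubgroup he where
  toFun ι := (⟨theta s ι.1 ι.1, hs.mul_theta_of_mul_eq he ι.2 _, hs.theta_theta_self he ι.2⟩,
    hs.thetaPerm he ι.1)
  invFun p := ⟨((p.2⁻¹ : hs.thetaSubgroup he) : Equiv.Perm S) p.1.1, by
    obtain ⟨w, hw⟩ := hs.exists_eq_thetaPerm he p.2⁻¹
    rw [hw]
    exact hs.mul_theta_of_mul_eq he p.1.2.1 w⟩
  left_inv ι := Subtype.ext ((hs.thetaPerm he ι.1 : Equiv.Perm S).symm_apply_apply ι.1)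
  right_inv := by
    rintro ⟨⟨χ, hχE, hχ⟩, a⟩
    obtain ⟨w, hw⟩ := hs.exists_eq_thetaPerm he a⁻¹
    obtain rfl : a = (hs.thetaPerm he w)⁻¹ := by rw [← hw, inv_inv]
    have hinv : hs.thetaPerm he (theta s w χ) = (hs.thetaPerm he w)⁻¹ :=
      eq_inv_of_mul_eq_one_left (Subtype.ext (Equiv.ext fun z =>
        (hs.theta_theta_of_mul_eq he hχE w z).trans (hχ z)))
    refine Prod.ext (Subtype.ext ?_) ?_
    · simp only [inv_inv]
      exact (hs.theta_theta_of_mul_eq he hχE w χ).trans (hχ χ)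
    · simp only [inv_inv]
      exact hinv

theorem mul_apply_mul (hs : IsBijectiveSolution s) (he : ∀ x, x * e = x)
    (a : hs.thetaSubgroup he) (v : S) :
    e * (a : Equiv.Perm S) (e * v) = e * (a : Equiv.Perm S) v := by
  obtain ⟨u, rfl⟩ := hs.exists_eq_thetaPerm he a
  exact hs.mul_theta_mul he u v

noncomputable def sigma (hs : IsBijectiveSolution s) (he : ∀ x, x * e = x)
    (a : hs.thetaSubgroup he) : {g : S // e * g = g} ≃ {g : S // e * g = g} where
  toFun g := ⟨e * (a : Equiv.Perm S) g.1, by rw [← mul_assoc, he]⟩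
  invFun g := ⟨e * ((a⁻¹ : hs.thetaSubgroup he) : Equiv.Perm S) g.1, by rw [← mul_assoc, he]⟩
  left_inv g := Subtype.ext (by
    change e * ((a⁻¹ : hs.thetaSubgroup he) : Equiv.Perm S) (e * (a : Equiv.Perm S) g.1) = g.1
    rw [hs.mul_apply_mul he, Subgroup.coe_inv, Equiv.Perm.inv_def, Equiv.symm_apply_apply, g.2])
  right_inv g := Subtype.ext (by
    change e * (a : Equiv.Perm S) (e * ((a⁻¹ : hs.thetaSubgroup he) : Equiv.Perm S) g.1) = g.1
    rw [hs.mul_apply_mul he, Subgroup.coe_inv, Equiv.Perm.inv_def, Equiv.apply_symm_apply, g.2])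

theorem sigma_mul (hs : IsBijectiveSolution s) (he : ∀ x, x * e = x)
    (a b : hs.thetaSubgroup he) (g : {g : S // e * g = g}) :
    hs.sigma he (a * b) g = hs.sigma he a (hs.sigma he b g) :=
  Subtype.ext (hs.mul_apply_mul he a _).symm

/-- `θ_u ↦ θ_{u w}`, written in terms of `a = θ_u` rather than a choice of `u`. -/
noncomputable def deltaFun (hs : IsBijectiveSolution s) (he : ∀ x, x * e = x) (w : S)
    (a : hs.thetaSubgroup he) : hs.thetaSubgroup he :=
  (hs.thetaPerm he ((a : Equiv.Perm S) w))⁻¹ * hs.thetaPerm he w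

theorem deltaFun_thetaPerm (hs : IsBijectiveSolution s) (he : ∀ x, x * e = x) (w u : S) :
    hs.deltaFun he w (hs.thetaPerm he u) = hs.thetaPerm he (u * w) := by
  rw [deltaFun, inv_mul_eq_iff_eq_mul]
  exact (hs.thetaPerm_theta_mul he u w).symm

theorem deltaFun_mul (hs : IsBijectiveSolution s) (he : ∀ x, x * e = x) (w x : S)
    (a : hs.thetaSubgroup he) :
    hs.deltaFun he (w * x) a = hs.deltaFun he x (hs.deltaFun he w a) := by
  obtain ⟨u, rfl⟩ := hs.exists_eq_thetaPerm he a
  simp only [hs.deltaFun_thetaPerm, mul_assoc]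

theorem deltaFun_of_mul_eq (hs : IsBijectiveSolution s) (he : ∀ x, x * e = x) {ι : S}
    (hι : e * ι = e) (a : hs.thetaSubgroup he) : hs.deltaFun he ι a = a := by
  obtain ⟨u, rfl⟩ := hs.exists_eq_thetaPerm he a
  rw [hs.deltaFun_thetaPerm, mul_eq_self_of_mul_eq he hι]

theorem deltaFun_mul_left (hs : IsBijectiveSolution s) (he : ∀ x, x * e = x) (w : S)
    (a : hs.thetaSubgroup he) : hs.deltaFun he (e * w) a = hs.deltaFun he w a := by
  obtain ⟨u, rfl⟩ := hs.exists_eq_thetaPerm he a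
  rw [hs.deltaFun_thetaPerm, hs.deltaFun_thetaPerm, ← mul_assoc, he]

theorem deltaFun_apply_mul (hs : IsBijectiveSolution s) (he : ∀ x, x * e = x) (w : S)
    (a b : hs.thetaSubgroup he) :
    hs.deltaFun he w (a * b) =
      hs.deltaFun he (e * (b : Equiv.Perm S) w) a * hs.deltaFun he w b := by
  rw [hs.deltaFun_mul_left, deltaFun, deltaFun, deltaFun, mul_assoc, mul_inv_cancel_left]
  rfl

theorem mul_apply_mul_eq (hs : IsBijectiveSolution s) (he : ∀ x, x * e = x)
    (a : hs.thetaSubgroup he) (x y : S) :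
    e * (a : Equiv.Perm S) (x * y) =
      e * (a : Equiv.Perm S) x * (e * (hs.deltaFun he x a : Equiv.Perm S) y) := by
  obtain ⟨u, rfl⟩ := hs.exists_eq_thetaPerm he a
  rw [hs.deltaFun_thetaPerm, ← mul_mul_eq_mul_mul_mul he]
  exact congrArg (e * ·) (hs.theta_mul_theta u x y).symm

noncomputable def delta (hs : IsBijectiveSolution s) (he : ∀ x, x * e = x) (w : S) :
    hs.thetaSubgroup he ≃ hs.thetaSubgroup he where
  toFun := hs.deltaFun he w
  invFun := hs.deltaFun he (hs.isLeftSimple.div e w)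
  left_inv a := by
    rw [← hs.deltaFun_mul]
    refine hs.deltaFun_of_mul_eq he (hs.isLeftSimple.mul_eq_of_mul_self_eq he ?_) a
    rw [mul_assoc, ← mul_assoc _ w, hs.isLeftSimple.div_mul, ← mul_assoc, he]
  right_inv a := by
    rw [← hs.deltaFun_mul, hs.isLeftSimple.div_mul, hs.deltaFun_of_mul_eq he (he e)]

noncomputable def fullEquiv (hs : IsBijectiveSolution s) (he : ∀ x, x * e = x) :
    S ≃ {χ : S // e * χ = e ∧ ∀ z, theta s χ z = z} × hs.thetaSubgroup he ×
      {g : S // e * g = g} :=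
  ((hs.isLeftSimple.decompEquiv he).trans ((hs.idemEquiv he).prodCongr (Equiv.refl _))).trans
    (Equiv.prodAssoc _ _ _)

theorem extSol_fullEquiv (hs : IsBijectiveSolution s) (he : ∀ x, x * e = x) (u v : S) :
    letI := hs.isLeftSimple.group he
    extSol (hs.sigma he) (fun g => hs.delta he g.1) (fun _ => Equiv.refl _)
        (hs.fullEquiv he u, hs.fullEquiv he v) =
      (hs.fullEquiv he (u * v), hs.fullEquiv he (theta s u v)) := by
  set ι := hs.isLeftSimple.idemPart e with hι
  have hδ : hs.deltaFun he (e * u) (hs.thetaPerm he (ι u)) = hs.thetaPerm he u := by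
    rw [hs.deltaFun_thetaPerm, hs.isLeftSimple.idemPart_mul_mul he]
  have hιθ : ι (theta s u v) = theta s u (ι v) := hs.idemPart_theta he u v
  refine Prod.ext (Prod.ext (Subtype.ext ?_) (Prod.ext ?_ (Subtype.ext ?_)))
    (Prod.ext (Subtype.ext ?_) (Prod.ext ?_ (Subtype.ext ?_)))
  · change theta s (ι u) (ι u) = theta s (ι (u * v)) (ι (u * v))
    rw [hι, hs.isLeftSimple.idemPart_mul he]
  · change hs.thetaPerm he (ι u) = hs.thetaPerm he (ι (u * v))
    rw [hι, hs.isLeftSimple.idemPart_mul he]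
  · change e * u * (e * v) = e * (u * v)
    exact (mul_mul_eq_mul_mul_mul he u v).symm
  · change theta s (ι v) (ι v) = theta s (ι (theta s u v)) (ι (theta s u v))
    rw [hιθ, hs.theta_theta_of_mul_eq he (hs.isLeftSimple.mul_idemPart he v)]
  · change hs.thetaPerm he (ι v) * (hs.deltaFun he (e * u) (hs.thetaPerm he (ι u)))⁻¹ =
      hs.thetaPerm he (ι (theta s u v))
    rw [hδ, hιθ, ← hs.thetaPerm_theta_mul_of_mul_eq he (hs.isLeftSimple.mul_idemPart he v) u,
      mul_inv_cancel_right]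
  · change e * (hs.deltaFun he (e * u) (hs.thetaPerm he (ι u)) : Equiv.Perm S) (e * v) =
      e * theta s u v
    rw [hδ]
    exact hs.mul_theta_mul he u v

end IsBijectiveSolution

def IsMatchedPairExtension {S : Type*} (s : S × S → S × S) : Prop :=
  ∃ (A : Type) (G : Type) (gA : Group A) (gG : Group G)
    (_ : Finite A) (_ : Finite G),
    letI := gA
    letI := gG
    ∃ (σ : A → G ≃ G) (δ : G → A ≃ A),
      (∀ (a b : A) (x : G), σ (a * b) x = σ a (σ b x)) ∧
      (∀ (x y : G) (a : A), δ (x * y) a = δ y (δ x a)) ∧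
      (∀ (a : A) (x y : G), σ a (x * y) = σ a x * σ (δ x a) y) ∧
      (∀ (x : G) (a b : A), δ x (a * b) = δ (σ b x) a * δ x b) ∧
      ∃ (X : Type) (_ : Nonempty X) (_ : Finite X) (φ : A → X ≃ X)
        (F : S ≃ X × A × G),
        ∀ p : S × S, extSol σ δ φ (F p.1, F p.2) = (F (s p).1, F (s p).2)

theorem IsBijectiveSolution.isMatchedPairExtension {S : Type} [Semigroup S] [Finite S]
    [Nonempty S] {s : S × S → S × S} (hs : IsBijectiveSolution s) :
    IsMatchedPairExtension s := by
  obtain ⟨e, he⟩ := hs.isLeftSimple.exists_mul_right_identity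
  let _ := hs.isLeftSimple.group he
  exact ⟨hs.thetaSubgroup he, {g : S // e * g = g}, inferInstance, inferInstance, inferInstance,
    inferInstance, hs.sigma he, fun g => hs.delta he g.1, hs.sigma_mul he,
    fun x y => hs.deltaFun_mul he x.1 y.1,
    fun a x y => Subtype.ext (hs.mul_apply_mul_eq he a x.1 y.1),
    fun x => hs.deltaFun_apply_mul he x.1, {χ : S // e * χ = e ∧ ∀ z, theta s χ z = z},
    ⟨⟨theta s e e, hs.mul_theta_of_mul_eq he (he e) e, hs.theta_theta_self he (he e)⟩⟩,
    inferInstance, fun _ => Equiv.refl _, hs.fullEquiv he,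
    fun p => by rw [hs.fst_eq]; exact hs.extSol_fullEquiv he p.1 p.2⟩

theorem IsPE.mul_assoc {S : Type*} {s : S × S → S × S} (hPE : IsPE s) (x y z : S) :
    mul s (mul s x y) z = mul s x (mul s y z) := by
  have h := congrFun hPE (x, y, z)
  simp only [comp_apply, s12, s13, s23, Prod.mk.injEq] at h
  exact h.1

abbrev IsPE.semigroup {S : Type*} {s : S × S → S × S} (hPE : IsPE s) : Semigroup S where
  mul := mul s
  mul_assoc := hPE.mul_assoc

def transfer {S T : Type*} (f : S ≃ T) (s : S × S → S × S) : T × T → T × T :=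
  f.prodCongr f ∘ s ∘ (f.prodCongr f).symm

theorem IsPE.transfer {S T : Type*} {s : S × S → S × S} (f : S ≃ T) (hPE : IsPE s) :
    IsPE (PE.transfer f s) := by
  set F := f.prodCongr (f.prodCongr f)
  have h12 : ∀ p, s12 (PE.transfer f s) (F p) = F (s12 s p) := fun p => by
    simp [F, s12, PE.transfer]
  have h13 : ∀ p, s13 (PE.transfer f s) (F p) = F (s13 s p) := fun p => by
    simp [F, s13, PE.transfer]
  have h23 : ∀ p, s23 (PE.transfer f s) (F p) = F (s23 s p) := fun p => by
    simp [F, s23, PE.transfer]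
  funext q
  obtain ⟨p, rfl⟩ := F.surjective q
  simp only [comp_apply, h12, h13, h23]
  exact congrArg F (congrFun hPE p)

theorem IsMatchedPairExtension.of_transfer {S T : Type*} {s : S × S → S × S} (f : S ≃ T)
    (h : IsMatchedPairExtension (transfer f s)) : IsMatchedPairExtension s := by
  obtain ⟨A, G, gA, gG, hA, hG, σ, δ, h₁, h₂, h₃, h₄, X, hX, hXf, φ, F, hF⟩ := h
  refine ⟨A, G, gA, gG, hA, hG, σ, δ, h₁, h₂, h₃, h₄, X, hX, hXf, φ, f.trans F, fun p => ?_⟩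
  simpa [transfer] using hF (f p.1, f p.2)

/-- main classification theorem: every finite bijective set-theoretic
solution to the Pentagon Equation is isomorphic to an extension `extSol σ δ φ` on
`X × A × G` of the solution associated to a matched pair of finite groups
`(A, G, σ, δ)`, for some nonempty finite set `X` and permutations `φ_a` of `X`. -/
theorem statement19 {S : Type*} [Finite S] [Nonempty S] (s : S × S → S × S)
    (hPE : IsPE s) (hbij : Function.Bijective s) :
    ∃ (A : Type) (G : Type) (gA : Group A) (gG : Group G)
      (_ : Finite A) (_ : Finite G),
      letI := gA
      letI := gG
      ∃ (σ : A → G ≃ G) (δ : G → A ≃ A),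
        (∀ (a b : A) (x : G), σ (a * b) x = σ a (σ b x)) ∧
        (∀ (x y : G) (a : A), δ (x * y) a = δ y (δ x a)) ∧
        (∀ (a : A) (x y : G), σ a (x * y) = σ a x * σ (δ x a) y) ∧
        (∀ (x : G) (a b : A), δ x (a * b) = δ (σ b x) a * δ x b) ∧
        ∃ (X : Type) (_ : Nonempty X) (_ : Finite X) (φ : A → X ≃ X)
          (F : S ≃ X × A × G),
          ∀ p : S × S, extSol σ δ φ (F p.1, F p.2) = (F (s p).1, F (s p).2) := by
  -- the construction stays in the universe of `S`, so move to `Fin (Nat.card S) : Type` first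
  let f := Finite.equivFin S
  have : Nonempty (Fin (Nat.card S)) := f.nonempty_congr.1 ‹_›
  have hPE' := hPE.transfer f
  let _ := hPE'.semigroup
  have hbij' : Bijective (transfer f s) :=
    (f.prodCongr f).bijective.comp (hbij.comp (f.prodCongr f).symm.bijective)
  exact IsMatchedPairExtension.of_transfer f
    (IsBijectiveSolution.isMatchedPairExtension ⟨fun _ => rfl, hPE', hbij'⟩)

end PE
end
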